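/- Let P be a finite poset, k a field, and Q a full subposet of P with inclusion ι : Q ↪ P. Let M be a persistence module over Q with End(M) ≅ k (a brick), and let X be a persistence module over P with Res(X) ≅ M. Then: (a) X is a quotient of Lan(M) (i.e. there is an epimorphism Lan(M) → X) if and only if for every proper subobject Y of X one has Res(Y) ≇ M; and dually (b) X is a subobject of Ran(M) (i.e. there is a monomorphism X → Ran(M)) if and only if for every proper quotient Z of X one has Res(Z) ≇ M. -/

import Mathlib

/-! Restriction is exact, and a monomorphism (or epimorphism) between two copies of a brick is
a nonzero element of the division ring `End M`, hence an isomorphism. So if `e : Lan M ⟶ X` is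
epi and `m : Y ⟶ X` is mono with `Res Y ≅ M`, then `Res m` is invertible; by adjunction `e`
factors through `m`, so `m` is epi and therefore an isomorphism. Conversely, the map
`Lan M ⟶ X` adjoint to `M ≅ Res X` restricts to a split epimorphism, so its image is a
subobject of `X` restricting to `M`, which must be all of `X`. Part (b) is dual. -/

open CategoryTheory CategoryTheory.Limits

attribute [local instance] CategoryTheory.Limits.HasFiniteBiproducts.of_hasFiniteProducts

section Posets

variable {P : Type} [PartialOrder P]

/-- Zigzag connectivity of two elements of a subset `S` of a poset: they are linked by a
zigzag of comparable pairs inside `S`. -/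
def ZigzagConnIn (S : Set P) (a b : S) : Prop :=
  Relation.ReflTransGen (fun u v : S => (u : P) ≤ v ∨ (v : P) ≤ u) a b

/-- A subset of a poset is convex if `x ≤ z ≤ y` with `x, y` in the subset implies `z` is. -/
def IsConvex (S : Set P) : Prop :=
  ∀ ⦃x y z : P⦄, x ∈ S → y ∈ S → x ≤ z → z ≤ y → z ∈ S

/-- An interval of a poset: a nonempty, convex, zigzag-connected subset. -/
def IsIntervalSet (S : Set P) : Prop :=
  S.Nonempty ∧ IsConvex S ∧ ∀ a b : S, ZigzagConnIn S a b

end Posets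

section IntervalModules

variable (k : Type) [Field k] {P : Type} [PartialOrder P]

open Classical in
/-- The linear map between the fibers of the interval module. -/
noncomputable def intervalModuleAux (S : Set P) (p q : P) :
    ↥(if p ∈ S then (⊤ : Submodule k k) else ⊥) →ₗ[k]
      ↥(if q ∈ S then (⊤ : Submodule k k) else ⊥) where
  toFun x := ⟨(if p ∈ S ∧ q ∈ S then (1 : k) else 0) * x.1, by
    by_cases hq : q ∈ S
    · rw [if_pos hq]; exact Submodule.mem_top
    · rw [if_neg hq, if_neg (fun h => hq h.2), zero_mul]; exact Submodule.zero_mem _⟩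
  map_add' x y := by ext; simp [mul_add]
  map_smul' c x := by ext; simp

open Classical in
/-- The interval module `k_S` associated to a convex subset `S` of a poset `P`:
it is `k` at points of `S`, `0` elsewhere, with identity structure maps inside `S`. -/
noncomputable def intervalModule (S : Set P) (hS : IsConvex S) : P ⥤ ModuleCat.{0} k where
  obj p := ModuleCat.of k ↥(if p ∈ S then (⊤ : Submodule k k) else ⊥)
  map {p q} _ := ModuleCat.ofHom (intervalModuleAux k S p q)
  map_id p := by
    apply ModuleCat.hom_ext
    apply LinearMap.ext
    rintro ⟨x, hx⟩
    apply Subtype.ext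
    show (if p ∈ S ∧ p ∈ S then (1 : k) else 0) * x = x
    by_cases hp : p ∈ S
    · simp [hp]
    · rw [if_neg hp] at hx
      simp [hp, (Submodule.mem_bot k).mp hx]
  map_comp {p q r} f g := by
    apply ModuleCat.hom_ext
    apply LinearMap.ext
    rintro ⟨x, hx⟩
    apply Subtype.ext
    show (if p ∈ S ∧ r ∈ S then (1 : k) else 0) * x
      = (if q ∈ S ∧ r ∈ S then (1 : k) else 0) * ((if p ∈ S ∧ q ∈ S then (1 : k) else 0) * x)
    by_cases hp : p ∈ S
    · by_cases hr : r ∈ S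
      · have hq : q ∈ S := hS hp hr (leOfHom f) (leOfHom g)
        simp [hp, hq, hr]
      · simp [hr]
    · rw [if_neg hp] at hx
      simp [(Submodule.mem_bot k).mp hx]

/-- A persistence module is an interval module if it is isomorphic to `k_S` for some
interval `S`. -/
def IsIntervalModule (M : P ⥤ ModuleCat.{0} k) : Prop :=
  ∃ (S : Set P) (hS : IsIntervalSet S), Nonempty (M ≅ intervalModule k S hS.2.1)

/-- A persistence module is interval-decomposable if it is isomorphic to a finite direct sum
of interval modules. -/
def IsIntervalDecomposable (M : P ⥤ ModuleCat.{0} k) : Prop :=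
  ∃ (n : ℕ) (J : Fin n → (P ⥤ ModuleCat.{0} k)),
    (∀ i, IsIntervalModule k (J i)) ∧ Nonempty (M ≅ ⨁ J)

/-- The support of a persistence module. -/
def moduleSupport (M : P ⥤ ModuleCat.{0} k) : Set P := {p : P | ¬ IsZero (M.obj p)}

/-- A persistence module valued in finite-dimensional vector spaces. -/
def PointwiseFinite (M : P ⥤ ModuleCat.{0} k) : Prop :=
  ∀ p : P, FiniteDimensional k (M.obj p)

end IntervalModules

section Approximations

variable {C : Type*} [Category C]

/-- `f : X ⟶ M` is a right `𝒳`-approximation of `M` if `X ∈ 𝒳` and every morphism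
from an object of `𝒳` to `M` factors through `f`. -/
def IsRightApproximation (𝒳 : C → Prop) {X M : C} (f : X ⟶ M) : Prop :=
  𝒳 X ∧ ∀ ⦃Y : C⦄ (g : Y ⟶ M), 𝒳 Y → ∃ h : Y ⟶ X, h ≫ f = g

/-- `f : X ⟶ M` is right minimal if every endomorphism `g` of `X` with `f ∘ g = f`
is an isomorphism. -/
def IsRightMinimal {X M : C} (f : X ⟶ M) : Prop :=
  ∀ g : X ⟶ X, g ≫ f = f → IsIso g

end Approximations

/-- An interval cover: a right minimal approximation by interval-decomposable modules. -/
def IsIntervalCover (k : Type) [Field k] {P : Type} [PartialOrder P]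
    {X M : P ⥤ ModuleCat.{0} k} (f : X ⟶ M) : Prop :=
  IsRightApproximation (IsIntervalDecomposable k) f ∧ IsRightMinimal f

section Resolutions

variable {C : Type*} [Category C] [Limits.HasZeroMorphisms C]

/-- `M` admits a resolution `0 ⟶ J_n ⟶ ⋯ ⟶ J_1 ⟶ J_0 ⟶ M ⟶ 0` of length `n` by objects
of `𝒳`: an exact sequence in which every `J_i` lies in `𝒳`.  (The data is encoded by an
`ℕ`-indexed complex which vanishes in degrees `> n` and is exact everywhere.) -/
def HasResolutionOfLength (𝒳 : C → Prop) (n : ℕ) (M : C) : Prop :=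
  ∃ (J : ℕ → C) (d : ∀ i, J (i + 1) ⟶ J i) (f : J 0 ⟶ M) (w0 : d 0 ≫ f = 0)
    (w : ∀ i, d (i + 1) ≫ d i = 0),
    (∀ i, i ≤ n → 𝒳 (J i)) ∧ (∀ i, n < i → IsZero (J i)) ∧
    Epi f ∧ (ShortComplex.mk (d 0) f w0).Exact ∧
    ∀ i, (ShortComplex.mk (d (i + 1)) (d i) (w i)).Exact

end Resolutions

section KanTheta

variable (k : Type) [Field k] {P : Type} [PartialOrder P] (Q : Set P)

/-- The restriction functor along the inclusion `ι : Q ↪ P` of a full subposet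
(precomposition with `ι`). -/
noncomputable def resFunctor : (P ⥤ ModuleCat.{0} k) ⥤ (↥Q ⥤ ModuleCat.{0} k) :=
  (CategoryTheory.Functor.whiskeringLeft _ _ _).obj (Subtype.mono_coe (· ∈ Q)).functor

variable (L R : (↥Q ⥤ ModuleCat.{0} k) ⥤ (P ⥤ ModuleCat.{0} k))
variable (adjL : L ⊣ resFunctor k Q) (adjR : resFunctor k Q ⊣ R)

/-- The canonical morphism `θ_M : Lan(M) ⟶ Ran(M)` corresponding to the identity of `M`
under the adjunction isomorphisms
`Hom(Lan M, Ran M) ≅ Hom(M, Res (Ran M)) ≅ Hom(M, M)`. -/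
noncomputable def thetaHom [IsIso adjR.counit] (M : ↥Q ⥤ ModuleCat.{0} k) :
    L.obj M ⟶ R.obj M :=
  (adjL.homEquiv M (R.obj M)).symm ((asIso adjR.counit).inv.app M)

lemma thetaHom_naturality [IsIso adjR.counit] {M N : ↥Q ⥤ ModuleCat.{0} k} (f : M ⟶ N) :
    L.map f ≫ thetaHom k Q L R adjL adjR N = thetaHom k Q L R adjL adjR M ≫ R.map f := by
  dsimp [thetaHom]
  rw [← Adjunction.homEquiv_naturality_left_symm, ← Adjunction.homEquiv_naturality_right_symm]
  congr 1
  simpa using ((asIso adjR.counit).inv.naturality f)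

/-- The functor `Θ`, sending `M` to the image of `θ_M : Lan(M) ⟶ Ran(M)`. -/
noncomputable def Theta [IsIso adjR.counit] :
    (↥Q ⥤ ModuleCat.{0} k) ⥤ (P ⥤ ModuleCat.{0} k) where
  obj M := image (thetaHom k Q L R adjL adjR M)
  map {M N} f := image.map (Arrow.homMk' _ _ (thetaHom_naturality k Q L R adjL adjR f))
  map_id M := by
    have h : Arrow.homMk' _ _ (thetaHom_naturality k Q L R adjL adjR (𝟙 M)) =
        𝟙 (Arrow.mk (thetaHom k Q L R adjL adjR M)) :=
      Arrow.hom_ext _ _ (by simp) (by simp)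
    show image.map (Arrow.homMk' _ _ (thetaHom_naturality k Q L R adjL adjR (𝟙 M))) =
      𝟙 (image (thetaHom k Q L R adjL adjR M))
    rw [h, image.map_id]
    rfl
  map_comp {M N O} f g := by
    have h : Arrow.homMk' _ _ (thetaHom_naturality k Q L R adjL adjR (f ≫ g)) =
        Arrow.homMk' _ _ (thetaHom_naturality k Q L R adjL adjR f) ≫
          Arrow.homMk' _ _ (thetaHom_naturality k Q L R adjL adjR g) :=
      Arrow.hom_ext _ _ (by simp) (by simp)
    show image.map (Arrow.homMk' _ _ (thetaHom_naturality k Q L R adjL adjR (f ≫ g))) =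
      image.map (Arrow.homMk' _ _ (thetaHom_naturality k Q L R adjL adjR f)) ≫
        image.map (Arrow.homMk' _ _ (thetaHom_naturality k Q L R adjL adjR g))
    rw [h, image.map_comp]

end KanTheta

namespace CategoryTheory

variable {C : Type*} [Category C] [Preadditive C] {K : Type*} [DivisionRing K]

lemma End.isIso_of_ne_zero {M : C} (ρ : End M ≃+* K) {f : End M} (hf : f ≠ 0) : IsIso f := by
  rw [← isUnit_iff_isIso]
  simpa using (IsUnit.mk0 (ρ f) (by simpa using hf)).map ρ.symm

lemma isIso_of_mono_of_iso_brick {M A B : C} (ρ : End M ≃+* K) (σ : A ≅ M) (τ : B ≅ M)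
    (f : A ⟶ B) [Mono f] : IsIso f := by
  have : Nontrivial (End M) := ρ.toEquiv.nontrivial
  have : IsIso (σ.inv ≫ f ≫ τ.hom) := End.isIso_of_ne_zero ρ fun h =>
    one_ne_zero (α := End M) ((cancel_mono (σ.inv ≫ f ≫ τ.hom)).1 (by simp [h]))
  simpa using (inferInstance : IsIso (σ.hom ≫ (σ.inv ≫ f ≫ τ.hom) ≫ τ.inv))

lemma isIso_of_epi_of_iso_brick {M A B : C} (ρ : End M ≃+* K) (σ : A ≅ M) (τ : B ≅ M)
    (f : A ⟶ B) [Epi f] : IsIso f := by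
  have : Nontrivial (End M) := ρ.toEquiv.nontrivial
  have : IsIso (σ.inv ≫ f ≫ τ.hom) := End.isIso_of_ne_zero ρ fun h =>
    one_ne_zero (α := End M) ((cancel_epi (σ.inv ≫ f ≫ τ.hom)).1 (by simp [h]))
  simpa using (inferInstance : IsIso (σ.hom ≫ (σ.inv ≫ f ≫ τ.hom) ≫ τ.inv))

end CategoryTheory

namespace CategoryTheory.Adjunction

variable {C D : Type*} [Category C] [Category D] {L R : D ⥤ C} {G : C ⥤ D}

lemma epi_map_homEquiv_symm (adj : L ⊣ G) {M : D} {X : C} (α : M ⟶ G.obj X) [Epi α] :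
    Epi (G.map ((adj.homEquiv M X).symm α)) :=
  epi_of_epi_fac (f := adj.unit.app M) (h := α) (by simp [← adj.homEquiv_unit])

lemma isIso_of_mono_of_epi_of_isIso_map [Balanced C] (adj : L ⊣ G) {M : D} {X Y : C}
    (e : L.obj M ⟶ X) [Epi e] (m : Y ⟶ X) [Mono m] [IsIso (G.map m)] : IsIso m := by
  have hfac : (adj.homEquiv M Y).symm (adj.homEquiv M X e ≫ inv (G.map m)) ≫ m = e := by
    rw [← adj.homEquiv_naturality_right_symm]
    simp
  have : Epi m := epi_of_epi_fac hfac
  exact isIso_of_mono_of_epi m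

lemma mono_map_homEquiv (adj : G ⊣ R) {X : C} {M : D} (α : G.obj X ⟶ M) [Mono α] :
    Mono (G.map (adj.homEquiv X M α)) :=
  mono_of_mono_fac (f := adj.counit.app M) (h := α) (by simp [← adj.homEquiv_counit])

lemma isIso_of_epi_of_mono_of_isIso_map [Balanced C] (adj : G ⊣ R) {M : D} {X Z : C}
    (m : X ⟶ R.obj M) [Mono m] (e : X ⟶ Z) [Epi e] [IsIso (G.map e)] : IsIso e := by
  have hfac : e ≫ adj.homEquiv Z M (inv (G.map e) ≫ (adj.homEquiv X M).symm m) = m := by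
    rw [← adj.homEquiv_naturality_left]
    simp
  have : Mono e := mono_of_mono_fac hfac
  exact isIso_of_mono_of_epi e

end CategoryTheory.Adjunction

namespace CategoryTheory.Functor

variable {C D : Type*} [Category C] [Category D] [Abelian C] [Balanced D] (G : C ⥤ D)

lemma epi_of_epi_map_of_forall_mono [G.PreservesMonomorphisms] {A X : C} (e : A ⟶ X)
    [Epi (G.map e)] (h : ∀ (Y : C) (m : Y ⟶ X), Mono m → IsIso (G.map m) → IsIso m) :
    Epi e := by
  have : Epi (G.map (image.ι e)) :=
    epi_of_epi_fac (f := G.map (factorThruImage e)) (by rw [← G.map_comp, image.fac])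
  have : IsIso (G.map (image.ι e)) := isIso_of_mono_of_epi _
  have : IsIso (image.ι e) := h _ _ inferInstance inferInstance
  rw [← image.fac e]
  infer_instance

lemma mono_of_mono_map_of_forall_epi [G.PreservesEpimorphisms] {X B : C} (m : X ⟶ B)
    [Mono (G.map m)] (h : ∀ (Z : C) (e : X ⟶ Z), Epi e → IsIso (G.map e) → IsIso e) :
    Mono m := by
  have : Mono (G.map (factorThruImage m)) :=
    mono_of_mono_fac (f := G.map (image.ι m)) (by rw [← G.map_comp, image.fac])
  have : IsIso (G.map (factorThruImage m)) := isIso_of_mono_of_epi _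
  have : IsIso (factorThruImage m) := h _ _ inferInstance inferInstance
  rw [← image.fac m]
  infer_instance

end CategoryTheory.Functor

namespace CategoryTheory.Adjunction

variable {C D : Type*} [Category C] [Category D] [Abelian C] [Preadditive D] [Balanced D]
  {G : C ⥤ D}
  {K : Type*} [DivisionRing K] {M : D} (ρ : End M ≃+* K) {X : C} (σ : G.obj X ≅ M)
include ρ σ

theorem exists_epi_iff_of_brick [G.PreservesMonomorphisms] {L : D ⥤ C} (adj : L ⊣ G) :
    (∃ e : L.obj M ⟶ X, Epi e) ↔
      ∀ (Y : C) (m : Y ⟶ X), Mono m → ¬ IsIso m → ¬ Nonempty (G.obj Y ≅ M) := by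
  constructor
  · rintro ⟨e, he⟩ Y m hm hm_iso ⟨τ⟩
    have : IsIso (G.map m) := isIso_of_mono_of_iso_brick ρ τ σ _
    exact hm_iso (adj.isIso_of_mono_of_epi_of_isIso_map e m)
  · intro H
    have := adj.epi_map_homEquiv_symm σ.inv
    refine ⟨_, G.epi_of_epi_map_of_forall_mono ((adj.homEquiv M X).symm σ.inv)
      fun Y m hm hGm => ?_⟩
    by_contra hm_iso
    exact H Y m hm hm_iso ⟨asIso (G.map m) ≪≫ σ⟩

theorem exists_mono_iff_of_brick [G.PreservesEpimorphisms] {R : D ⥤ C} (adj : G ⊣ R) :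
    (∃ m : X ⟶ R.obj M, Mono m) ↔
      ∀ (Z : C) (e : X ⟶ Z), Epi e → ¬ IsIso e → ¬ Nonempty (G.obj Z ≅ M) := by
  constructor
  · rintro ⟨m, hm⟩ Z e he he_iso ⟨τ⟩
    have : IsIso (G.map e) := isIso_of_epi_of_iso_brick ρ σ τ _
    exact he_iso (adj.isIso_of_epi_of_mono_of_isIso_map m e)
  · intro H
    have := adj.mono_map_homEquiv σ.hom
    refine ⟨_, G.mono_of_mono_map_of_forall_epi (adj.homEquiv X M σ.hom)
      fun Z e he hGe => ?_⟩
    by_contra he_iso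
    exact H Z e he he_iso ⟨(asIso (G.map e)).symm ≪≫ σ⟩

end CategoryTheory.Adjunction

section Restriction

variable {k : Type} [Field k] {P : Type} [PartialOrder P] {Q : Set P}

instance : (resFunctor k Q).PreservesMonomorphisms := by
  unfold resFunctor
  infer_instance

instance : (resFunctor k Q).PreservesEpimorphisms := by
  unfold resFunctor
  infer_instance

end Restriction

theorem quotient_lan_subobject_ran_characterization
    (k : Type) [Field k] (P : Type) [PartialOrder P] (Q : Set P)
    (L R : (↥Q ⥤ ModuleCat.{0} k) ⥤ (P ⥤ ModuleCat.{0} k))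
    (adjL : L ⊣ resFunctor k Q) (adjR : resFunctor k Q ⊣ R)
    (M : ↥Q ⥤ ModuleCat.{0} k)
    (hbrick : Nonempty (CategoryTheory.End M ≃+* k))
    (X : P ⥤ ModuleCat.{0} k) (hres : Nonempty ((resFunctor k Q).obj X ≅ M)) :
    ((∃ e : L.obj M ⟶ X, Epi e) ↔
      ∀ (Y : P ⥤ ModuleCat.{0} k) (m : Y ⟶ X), Mono m → ¬ IsIso m →
        ¬ Nonempty ((resFunctor k Q).obj Y ≅ M)) ∧
    ((∃ m : X ⟶ R.obj M, Mono m) ↔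
      ∀ (Z : P ⥤ ModuleCat.{0} k) (e : X ⟶ Z), Epi e → ¬ IsIso e →
        ¬ Nonempty ((resFunctor k Q).obj Z ≅ M)) := by
  obtain ⟨ρ⟩ := hbrick
  obtain ⟨σ⟩ := hres
  exact ⟨adjL.exists_epi_iff_of_brick ρ σ, adjR.exists_mono_iff_of_brick ρ σ⟩
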